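/- arXiv:2104.07794 — 2 statements merged into one kernel-verified Lean document; each statement's English description precedes it below -/
import Mathlib

section
/- Let σ be the ReLU activation, m ∈ ℕ⁺, A a finite set, and let F_r be the class of functions f(x,a) = (1/m) Σ_{j=1}^m b_{j,a} σ(ω_{j,a}·x) on S^{d−1}×A with max_{a∈A} (1/m) Σ_{j=1}^m |b_{j,a}| ‖ω_{j,a}‖ ≤ r. For any probability measure ν on S^{d−1}×A, if (x_1,a_1),…,(x_n,a_n) are i.i.d. from ν and ξ_1,…,ξ_n are i.i.d. Rademacher variables independent of the data, then Rad_n(F_r) = (1/n) E sup_{f∈F_r} Σ_{i=1}^n ξ_i f(x_i,a_i) ≤ 2r √(|A|/n); i.e., part (ii) of Assumption (General) holds with M = 2√|A|. -/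
/-!
For a fixed sample `(xᵢ, aᵢ)`, split it by label: `yₐ,ᵢ = xᵢ` if `aᵢ = a` and `0` otherwise.
Positive homogeneity of `σ` rescales each neuron `ω_{j,a}` into the unit ball, so by the
path-norm constraint `∑ᵢ ξᵢ f(xᵢ, aᵢ) ≤ r ∑ₐ sup_{‖ω‖ ≤ 1} |∑ᵢ ξᵢ σ(⟪ω, yₐ,ᵢ⟫)|`. Since the
process vanishes at `ω = 0` and is odd in `ξ`, the absolute value costs a factor `2` on average
over the signs; the Ledoux–Talagrand contraction principle then removes the `1`-Lipschitz `σ`,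
and the remaining supremum is `‖∑ᵢ ξᵢ yₐ,ᵢ‖`, whose average is at most `√nₐ` by the
parallelogram law and Cauchy–Schwarz (`nₐ` being the number of sample points with label `a`).
Finally `∑ₐ √nₐ ≤ √(|A| n)`.
-/

open MeasureTheory
open scoped NNReal ENNReal

noncomputable section

def radM : Measure ℝ :=
  ((1 : ℝ≥0) / 2) • Measure.dirac (1 : ℝ) + ((1 : ℝ≥0) / 2) • Measure.dirac (-1 : ℝ)

/-- Rademacher complexity `Rad_n(G)` of a class `G` of functions, for `n` i.i.d. samples
from `ν` and independent i.i.d. Rademacher signs. -/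
def rad {Z : Type*} [MeasurableSpace Z] (ν : Measure Z) [SigmaFinite ν]
    (G : Set (Z → ℝ)) (n : ℕ) : ℝ :=
  (n : ℝ)⁻¹ * ∫ zs : Fin n → Z, ∫ ξ : Fin n → ℝ,
      sSup {t : ℝ | ∃ f ∈ G, t = ∑ i, ξ i * f (zs i)}
    ∂(Measure.pi fun _ : Fin n => radM) ∂(Measure.pi fun _ : Fin n => ν)

open Set Metric
open scoped RealInnerProductSpace

/-- A sign vector `ξ ∈ {-1, 1}ⁿ` is encoded as `s : Fin n → Bool` with `ξ i = boolSign (s i)`. -/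
def boolSign (b : Bool) : ℝ := if b then 1 else -1

@[simp] lemma boolSign_true : boolSign true = 1 := rfl

@[simp] lemma boolSign_false : boolSign false = -1 := rfl

lemma boolSign_not (b : Bool) : boolSign (!b) = -boolSign b := by cases b <;> simp

lemma abs_boolSign (b : Bool) : |boolSign b| = 1 := by cases b <;> simp

lemma Fintype.sum_pi_fin_succ {β M : Type*} [Fintype β] [AddCommMonoid M] {n : ℕ}
    (F : (Fin (n + 1) → β) → M) :
    ∑ s, F s = ∑ b, ∑ t : Fin n → β, F (Fin.cons b t) := by
  rw [← (Fin.consEquiv fun _ => β).sum_comp, Fintype.sum_prod_type]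
  rfl

lemma Fintype.sum_bool_pi_not {M : Type*} [AddCommMonoid M] {ι : Type*} [Fintype ι]
    [DecidableEq ι] (F : (ι → Bool) → M) : ∑ s : ι → Bool, F (fun i => !s i) = ∑ s, F s :=
  (Equiv.piCongrRight fun _ => Equiv.boolNot).sum_comp F

instance : IsProbabilityMeasure radM := by
  constructor
  simp [radM, ENNReal.smul_def, ENNReal.inv_two_add_inv_two]

lemma radM_apply {t : Set ℝ} (ht : MeasurableSet t) :
    radM t = ∑ b, 2⁻¹ * t.indicator 1 (boolSign b) := by
  simp [radM, Measure.dirac_apply' _ ht, ENNReal.smul_def]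

lemma pi_radM (ι : Type*) [Fintype ι] [DecidableEq ι] :
    Measure.pi (fun _ : ι => radM)
      = ((2 : ℝ≥0∞) ^ Fintype.card ι)⁻¹ • ∑ s : ι → Bool, Measure.dirac (boolSign ∘ s) := by
  refine Measure.pi_eq fun t ht => ?_
  simp_rw [Measure.smul_apply, Measure.finsetSum_apply,
    Measure.dirac_apply' _ (MeasurableSet.univ_pi ht), ← Finset.coe_univ,
    Set.indicator_pi_one_apply, radM_apply (ht _), Fintype.prod_sum, Finset.prod_mul_distrib,
    Finset.prod_const, Finset.card_univ, ← Finset.mul_sum, ENNReal.inv_pow, smul_eq_mul,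
    Function.comp_apply]

lemma integral_pi_radM {ι : Type*} [Fintype ι] [DecidableEq ι] (g : (ι → ℝ) → ℝ) :
    ∫ ξ, g ξ ∂(Measure.pi fun _ : ι => radM)
      = ((2 : ℝ) ^ Fintype.card ι)⁻¹ * ∑ s : ι → Bool, g (boolSign ∘ s) := by
  rw [pi_radM, integral_smul_measure,
    integral_finsetSum_measure fun s _ => integrable_dirac enorm_lt_top]
  simp [integral_dirac, ENNReal.toReal_inv]

lemma integral_le_of_forall_le {α : Type*} [MeasurableSpace α] {μ : Measure α}
    [IsProbabilityMeasure μ] {f : α → ℝ} {C : ℝ} (hC : 0 ≤ C) (hf : ∀ x, f x ≤ C) :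
    ∫ x, f x ∂μ ≤ C := by
  by_cases hint : Integrable f μ
  · simpa using integral_mono hint (integrable_const C) hf
  · simpa [integral_undef hint] using hC

lemma rad_le_of_forall_sum_sSup_le {Z : Type*} [MeasurableSpace Z] (ν : Measure Z)
    [IsProbabilityMeasure ν] (G : Set (Z → ℝ)) (n : ℕ) {B : ℝ} (hB : 0 ≤ B)
    (h : ∀ zs : Fin n → Z, ∑ s : Fin n → Bool,
      sSup {t : ℝ | ∃ f ∈ G, t = ∑ i, boolSign (s i) * f (zs i)} ≤ 2 ^ n * B) :
    rad ν G n ≤ B / n := by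
  rw [rad, inv_mul_eq_div]
  gcongr
  refine integral_le_of_forall_le hB fun zs => ?_
  rw [integral_pi_radM, Fintype.card_fin, inv_mul_le_iff₀ (by positivity)]
  exact h zs

lemma Finset.sum_le_sqrt_card_mul_sum_sq {ι : Type*} (s : Finset ι) (f : ι → ℝ) :
    ∑ i ∈ s, f i ≤ √(s.card * ∑ i ∈ s, f i ^ 2) :=
  (le_abs_self _).trans (Real.abs_le_sqrt sq_sum_le_card_mul_sum_sq)

lemma Real.sqrt_mul_div_of_nonneg (x : ℝ) {y : ℝ} (hy : 0 ≤ y) : √(x * y) / y = √(x / y) := by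
  rcases hy.eq_or_lt with rfl | hy
  · simp
  rw [Real.sqrt_mul' x hy.le, Real.sqrt_div' x hy.le]
  have : 0 < √y := Real.sqrt_pos.mpr hy
  field_simp
  rw [Real.sq_sqrt hy.le]

section Suprema

variable {α : Type*}

lemma Real.iSup_add_iSup_le [Nonempty α] {β : Type*} [Nonempty β] {f : α → ℝ} {g : β → ℝ}
    {c : ℝ}
    (h : ∀ a b, f a + g b ≤ c) : (⨆ a, f a) + ⨆ b, g b ≤ c :=
  le_sub_iff_add_le.mp <| ciSup_le fun a =>
    le_sub_comm.mp <| ciSup_le fun b => le_sub_iff_add_le'.mpr (h a b)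

lemma bddAbove_range_add_of_abs_le {f h : α → ℝ} {C : ℝ} (hf : ∀ ω, |f ω| ≤ C)
    (hh : BddAbove (range h)) : BddAbove (range fun ω => f ω + h ω) := by
  obtain ⟨M, hM⟩ := hh
  refine ⟨C + M, ?_⟩
  rintro _ ⟨ω, rfl⟩
  exact add_le_add ((le_abs_self _).trans (hf ω)) (hM ⟨ω, rfl⟩)

lemma iSup_abs_le_iSup_add_iSup_neg [Nonempty α] {F : α → ℝ}
    (hF : BddAbove (range fun ω => |F ω|)) {ω₀ : α} (h₀ : F ω₀ = 0) :
    ⨆ ω, |F ω| ≤ (⨆ ω, F ω) + ⨆ ω, -F ω := by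
  obtain ⟨M, hM⟩ := hF
  have hF₁ : BddAbove (range F) :=
    ⟨M, by rintro _ ⟨ω, rfl⟩; exact (le_abs_self _).trans (hM ⟨ω, rfl⟩)⟩
  have hF₂ : BddAbove (range fun ω => -F ω) :=
    ⟨M, by rintro _ ⟨ω, rfl⟩; exact (neg_le_abs _).trans (hM ⟨ω, rfl⟩)⟩
  have h₁ : 0 ≤ ⨆ ω, F ω := h₀ ▸ le_ciSup hF₁ ω₀
  have h₂ : 0 ≤ ⨆ ω, -F ω := by simpa [h₀] using le_ciSup hF₂ ω₀
  exact ciSup_le fun ω => abs_le'.mpr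
    ⟨by linarith [le_ciSup hF₁ ω], by linarith [le_ciSup hF₂ ω]⟩

/-- The contraction principle below for a single sign. -/
lemma iSup_comp_add_iSup_neg_comp_le [Nonempty α] {φ : ℝ → ℝ} (hφ : LipschitzWith 1 φ)
    {u h : α → ℝ}
    (h₁ : BddAbove (range fun ω => u ω + h ω)) (h₂ : BddAbove (range fun ω => -u ω + h ω)) :
    (⨆ ω, φ (u ω) + h ω) + (⨆ ω, -φ (u ω) + h ω)
      ≤ (⨆ ω, u ω + h ω) + ⨆ ω, -u ω + h ω := by
  refine Real.iSup_add_iSup_le fun ω₁ ω₂ => ?_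
  have hlip : |φ (u ω₁) - φ (u ω₂)| ≤ |u ω₁ - u ω₂| := by
    simpa [Real.dist_eq] using hφ.dist_le_mul (u ω₁) (u ω₂)
  have := le_ciSup h₁ ω₁
  have := le_ciSup h₁ ω₂
  have := le_ciSup h₂ ω₁
  have := le_ciSup h₂ ω₂
  cases abs_cases (u ω₁ - u ω₂) <;> cases abs_le.mp hlip <;> linarith

lemma abs_sum_boolSign_mul_le {ι : Type*} [Fintype ι] (s : ι → Bool) (v : ι → ℝ) :
    |∑ i, boolSign (s i) * v i| ≤ ∑ i, |v i| :=
  (Finset.abs_sum_le_sum_abs _ _).trans_eq <| by simp [abs_mul, abs_boolSign]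

/-- The Ledoux–Talagrand contraction principle for Rademacher averages of suprema. -/
theorem sum_iSup_sum_boolSign_mul_comp_le [Nonempty α] {φ : ℝ → ℝ}
    (hφ : LipschitzWith 1 φ) {n : ℕ} (u : Fin n → α → ℝ) (C : Fin n → ℝ)
    (hu : ∀ i ω, |u i ω| ≤ C i) (h : α → ℝ) (hh : BddAbove (range h)) :
    ∑ s : Fin n → Bool, ⨆ ω, (∑ i, boolSign (s i) * φ (u i ω) + h ω)
      ≤ ∑ s : Fin n → Bool, ⨆ ω, (∑ i, boolSign (s i) * u i ω + h ω) := by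
  induction n generalizing h with
  | zero => simp
  | succ n ih =>
    set H : (Fin n → Bool) → α → ℝ := fun t ω => ∑ i, boolSign (t i) * u i.succ ω + h ω
    have hH : ∀ t, BddAbove (range (H t)) := fun t =>
      bddAbove_range_add_of_abs_le (fun ω => (abs_sum_boolSign_mul_le t _).trans
        (Finset.sum_le_sum fun i _ => hu i.succ ω)) hh
    have hφu : ∀ b ω, |boolSign b * φ (u 0 ω)| ≤ |φ 0| + C 0 := fun b ω => by
      have := hφ.dist_le_mul (u 0 ω) 0
      simp only [Real.dist_eq, NNReal.coe_one, one_mul, sub_zero] at this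
      rw [abs_mul, abs_boolSign, one_mul]
      linarith [abs_sub_abs_le_abs_sub (φ (u 0 ω)) (φ 0), hu 0 ω]
    calc ∑ s : Fin (n + 1) → Bool, ⨆ ω, (∑ i, boolSign (s i) * φ (u i ω) + h ω)
        = ∑ b, ∑ t : Fin n → Bool,
            ⨆ ω, (∑ i, boolSign (t i) * φ (u i.succ ω) + (boolSign b * φ (u 0 ω) + h ω)) := by
          simp only [Fintype.sum_pi_fin_succ, Fin.sum_univ_succ, Fin.cons_zero, Fin.cons_succ]
          exact Fintype.sum_congr _ _ fun b => Fintype.sum_congr _ _ fun t =>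
            iSup_congr fun ω => by ring
      _ ≤ ∑ b, ∑ t : Fin n → Bool,
            ⨆ ω, (∑ i, boolSign (t i) * u i.succ ω + (boolSign b * φ (u 0 ω) + h ω)) :=
          Finset.sum_le_sum fun b _ => ih _ _ (fun i => hu i.succ) _ <|
            bddAbove_range_add_of_abs_le (hφu b) hh
      _ = ∑ t, ((⨆ ω, φ (u 0 ω) + H t ω) + ⨆ ω, -φ (u 0 ω) + H t ω) := by
          rw [Finset.sum_comm]
          simp only [Fintype.sum_bool, boolSign_true, boolSign_false, H]
          exact Fintype.sum_congr _ _ fun t => by congr 1 <;> exact iSup_congr fun ω => by ring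
      _ ≤ ∑ t, ((⨆ ω, u 0 ω + H t ω) + ⨆ ω, -u 0 ω + H t ω) :=
          Finset.sum_le_sum fun t _ => iSup_comp_add_iSup_neg_comp_le hφ
            (bddAbove_range_add_of_abs_le (hu 0) (hH t))
            (bddAbove_range_add_of_abs_le (by simpa using hu 0) (hH t))
      _ = ∑ s : Fin (n + 1) → Bool, ⨆ ω, (∑ i, boolSign (s i) * u i ω + h ω) := by
          simp only [Fintype.sum_pi_fin_succ, Fintype.sum_bool, Fin.sum_univ_succ, Fin.cons_zero,
            Fin.cons_succ, boolSign_true, boolSign_false, H, ← Finset.sum_add_distrib]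
          exact Fintype.sum_congr _ _ fun t => by congr 1 <;> exact iSup_congr fun ω => by ring

end Suprema

section InnerProductSpace

variable {E : Type*} [NormedAddCommGroup E] [InnerProductSpace ℝ E]

lemma sum_norm_sq_sum_boolSign_smul {n : ℕ} (y : Fin n → E) :
    ∑ s : Fin n → Bool, ‖∑ i, boolSign (s i) • y i‖ ^ 2 = 2 ^ n * ∑ i, ‖y i‖ ^ 2 := by
  induction n with
  | zero => simp
  | succ n ih =>
    rw [Fintype.sum_pi_fin_succ, Fintype.sum_bool, ← Finset.sum_add_distrib]
    simp only [Fin.sum_univ_succ, Fin.cons_zero, Fin.cons_succ, boolSign_true, boolSign_false,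
      one_smul, neg_one_smul, add_comm (y 0), neg_add_eq_sub, parallelogram_law_with_norm ℝ,
      Finset.sum_add_distrib, ← Finset.mul_sum, Finset.sum_const, Finset.card_univ,
      Fintype.card_fun, Fintype.card_bool, Fintype.card_fin, nsmul_eq_mul, ih (fun i => y i.succ)]
    push_cast
    ring

lemma sum_norm_sum_boolSign_smul_le {n : ℕ} (y : Fin n → E) :
    ∑ s : Fin n → Bool, ‖∑ i, boolSign (s i) • y i‖ ≤ 2 ^ n * √(∑ i, ‖y i‖ ^ 2) := by
  refine (Finset.sum_le_sqrt_card_mul_sum_sq _ _).trans_eq ?_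
  rw [sum_norm_sq_sum_boolSign_smul, Finset.card_univ, Fintype.card_fun, Fintype.card_bool,
    Fintype.card_fin, Nat.cast_pow, Nat.cast_ofNat, ← mul_assoc, ← sq,
    Real.sqrt_mul (by positivity), Real.sqrt_sq (by positivity)]

instance : Nonempty (closedBall (0 : E) 1) := ⟨⟨0, by simp⟩⟩

lemma abs_inner_le_norm_of_mem_closedBall {ω : E} (hω : ω ∈ closedBall (0 : E) 1) (y : E) :
    |⟪ω, y⟫| ≤ ‖y‖ :=
  (abs_real_inner_le_norm _ _).trans
    (mul_le_of_le_one_left (norm_nonneg _) (mem_closedBall_zero_iff.mp hω))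

lemma inv_norm_smul_mem_closedBall (v : E) : ‖v‖⁻¹ • v ∈ closedBall (0 : E) 1 := by
  rcases eq_or_ne v 0 with rfl | hv
  · simp
  · simp [norm_smul, hv]

lemma iSup_inner_closedBall (v : E) : ⨆ ω : closedBall (0 : E) 1, ⟪(ω : E), v⟫ = ‖v‖ := by
  have hbdd : BddAbove (range fun ω : closedBall (0 : E) 1 => ⟪(ω : E), v⟫) :=
    ⟨‖v‖, by
      rintro _ ⟨ω, rfl⟩
      exact (le_abs_self _).trans (abs_inner_le_norm_of_mem_closedBall ω.2 v)⟩
  refine le_antisymm (ciSup_le fun ω => (le_abs_self _).trans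
    (abs_inner_le_norm_of_mem_closedBall ω.2 v)) ?_
  refine le_ciSup_of_le hbdd ⟨_, inv_norm_smul_mem_closedBall v⟩ (le_of_eq ?_)
  rw [real_inner_smul_left, real_inner_self_eq_norm_mul_norm, ← mul_assoc, inv_mul_mul_self]

lemma abs_relu_inner_le {ω : E} (hω : ω ∈ closedBall (0 : E) 1) (y : E) :
    |max ⟪ω, y⟫ 0| ≤ ‖y‖ :=
  calc |max ⟪ω, y⟫ 0| ≤ |⟪ω, y⟫| := by simpa using abs_max_sub_max_le_abs ⟪ω, y⟫ 0 0
    _ ≤ ‖y‖ := abs_inner_le_norm_of_mem_closedBall hω y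

lemma bddAbove_abs_sum_mul_relu_inner {ι : Type*} [Fintype ι] (c : ι → ℝ) (y : ι → E) :
    BddAbove (range fun ω : closedBall (0 : E) 1 => |∑ i, c i * max ⟪(ω : E), y i⟫ 0|) := by
  refine ⟨∑ i, |c i| * ‖y i‖, ?_⟩
  rintro _ ⟨ω, rfl⟩
  refine (Finset.abs_sum_le_sum_abs _ _).trans (Finset.sum_le_sum fun i _ => ?_)
  rw [abs_mul]
  exact mul_le_mul_of_nonneg_left (abs_relu_inner_le ω.2 _) (abs_nonneg _)

/-- Positive homogeneity of the ReLU reduces every neuron `w` to the unit ball. -/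
lemma abs_sum_mul_relu_inner_le {ι : Type*} [Fintype ι] (c : ι → ℝ) (y : ι → E) (w : E) :
    |∑ i, c i * max ⟪w, y i⟫ 0|
      ≤ ‖w‖ * ⨆ ω : closedBall (0 : E) 1, |∑ i, c i * max ⟪(ω : E), y i⟫ 0| := by
  have hw : w = ‖w‖ • (‖w‖⁻¹ • w) := by
    rcases eq_or_ne w 0 with rfl | hw
    · simp
    · rw [smul_inv_smul₀ (norm_ne_zero_iff.mpr hw)]
  have hhom : ∑ i, c i * max ⟪w, y i⟫ 0 = ‖w‖ * ∑ i, c i * max ⟪‖w‖⁻¹ • w, y i⟫ 0 := by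
    conv_lhs => rw [hw]
    simp only [real_inner_smul_left, Finset.mul_sum]
    refine Finset.sum_congr rfl fun i _ => ?_
    have := mul_max_of_nonneg (‖w‖⁻¹ * ⟪w, y i⟫) 0 (norm_nonneg w)
    rw [mul_zero] at this
    rw [← this]
    ring
  rw [hhom, abs_mul, abs_norm]
  exact mul_le_mul_of_nonneg_left
    (le_ciSup (bddAbove_abs_sum_mul_relu_inner c y) ⟨_, inv_norm_smul_mem_closedBall w⟩)
    (norm_nonneg _)

theorem sum_iSup_abs_sum_boolSign_mul_relu_le {n : ℕ} (y : Fin n → E) :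
    ∑ s : Fin n → Bool, ⨆ ω : closedBall (0 : E) 1, |∑ i, boolSign (s i) * max ⟪(ω : E), y i⟫ 0|
      ≤ 2 * (2 ^ n * √(∑ i, ‖y i‖ ^ 2)) := by
  set R : (Fin n → Bool) → closedBall (0 : E) 1 → ℝ :=
    fun s ω => ∑ i, boolSign (s i) * max ⟪(ω : E), y i⟫ 0
  have hneg : ∀ s ω, -R s ω = R (fun i => !s i) ω := fun s ω => by
    simp only [R, boolSign_not, neg_mul, Finset.sum_neg_distrib]
  have hR₀ : ∀ s, R s ⟨0, by simp⟩ = 0 := fun s => by simp [R]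
  have hcontr := sum_iSup_sum_boolSign_mul_comp_le (LipschitzWith.id.max_const 0)
    (fun i (ω : closedBall (0 : E) 1) => ⟪(ω : E), y i⟫) (fun i => ‖y i‖)
    (fun i ω => abs_inner_le_norm_of_mem_closedBall ω.2 (y i)) 0 (bddAbove_def.mpr ⟨0, by simp⟩)
  simp only [Pi.zero_apply, add_zero, id] at hcontr
  calc ∑ s, ⨆ ω, |R s ω|
      ≤ ∑ s, ((⨆ ω, R s ω) + ⨆ ω, R (fun i => !s i) ω) := Finset.sum_le_sum fun s _ => by
        simpa only [hneg] using iSup_abs_le_iSup_add_iSup_neg (F := R s)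
          (bddAbove_abs_sum_mul_relu_inner _ y) (hR₀ s)
    _ = 2 * ∑ s, ⨆ ω, R s ω := by
        rw [Finset.sum_add_distrib, Fintype.sum_bool_pi_not (fun s => ⨆ ω, R s ω), two_mul]
    _ ≤ 2 * ∑ s : Fin n → Bool, ⨆ ω : closedBall (0 : E) 1,
          ⟪(ω : E), ∑ i, boolSign (s i) • y i⟫ := by
        gcongr 2 * ?_
        simpa only [inner_sum, real_inner_smul_right] using hcontr
    _ ≤ 2 * (2 ^ n * √(∑ i, ‖y i‖ ^ 2)) := by
        simp only [iSup_inner_closedBall]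
        gcongr
        exact sum_norm_sum_boolSign_smul_le y

end InnerProductSpace

abbrev UnitSphere (d : ℕ) := sphere (0 : EuclideanSpace ℝ (Fin d)) 1

section Networks

variable {d m n : ℕ} {A : Type*} [Fintype A]

def reluNetworkClass (d m : ℕ) (A : Type*) (r : ℝ) : Set (UnitSphere d × A → ℝ) :=
  {f | ∃ (b : A → Fin m → ℝ) (w : A → Fin m → EuclideanSpace ℝ (Fin d)),
    (∀ a, (m : ℝ)⁻¹ * (∑ j, |b a j| * ‖w a j‖) ≤ r) ∧
    ∀ x a, f (x, a)
      = (m : ℝ)⁻¹ * ∑ j, b a j * max (inner ℝ (w a j) (x : EuclideanSpace ℝ (Fin d)) : ℝ) 0}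

def sampleAt [DecidableEq A] (zs : Fin n → UnitSphere d × A) (a : A) :
    Fin n → EuclideanSpace ℝ (Fin d) :=
  fun i => if (zs i).2 = a then ((zs i).1 : EuclideanSpace ℝ (Fin d)) else 0

lemma sum_sum_norm_sq_sampleAt [DecidableEq A] (zs : Fin n → UnitSphere d × A) :
    ∑ a, ∑ i, ‖sampleAt zs a i‖ ^ 2 = n := by
  rw [Finset.sum_comm]
  simp [sampleAt, apply_ite (fun v : EuclideanSpace ℝ (Fin d) => ‖v‖ ^ 2),
    norm_eq_of_mem_sphere]

lemma apply_eq_sum_sampleAt [DecidableEq A] {f : UnitSphere d × A → ℝ}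
    {b : A → Fin m → ℝ} {w : A → Fin m → EuclideanSpace ℝ (Fin d)}
    (hf : ∀ x a, f (x, a) = (m : ℝ)⁻¹ * ∑ j, b a j * max ⟪w a j, (x : EuclideanSpace ℝ (Fin d))⟫ 0)
    (zs : Fin n → UnitSphere d × A) (i : Fin n) :
    f (zs i) = ∑ a, (m : ℝ)⁻¹ * ∑ j, b a j * max ⟪w a j, sampleAt zs a i⟫ 0 := by
  rw [Finset.sum_eq_single (zs i).2 (fun a _ ha => by simp [sampleAt, Ne.symm ha]) (by simp)]
  simp [sampleAt, ← hf]

lemma sum_boolSign_mul_le_of_mem_reluNetworkClass [DecidableEq A] {r : ℝ} {f : UnitSphere d × A → ℝ}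
    (hf : f ∈ reluNetworkClass d m A r) (zs : Fin n → UnitSphere d × A) (s : Fin n → Bool) :
    ∑ i, boolSign (s i) * f (zs i) ≤ r * ∑ a, ⨆ ω : closedBall (0 : EuclideanSpace ℝ (Fin d)) 1,
      |∑ i, boolSign (s i) * max ⟪(ω : EuclideanSpace ℝ (Fin d)), sampleAt zs a i⟫ 0| := by
  obtain ⟨b, w, hbw, hf⟩ := hf
  set S : A → ℝ := fun a => ⨆ ω : closedBall (0 : EuclideanSpace ℝ (Fin d)) 1,
      |∑ i, boolSign (s i) * max ⟪(ω : EuclideanSpace ℝ (Fin d)), sampleAt zs a i⟫ 0|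
  have hS : ∀ a, 0 ≤ S a := fun a => Real.iSup_nonneg fun _ => abs_nonneg _
  calc ∑ i, boolSign (s i) * f (zs i)
      = ∑ a, (m : ℝ)⁻¹ * ∑ j, b a j * ∑ i, boolSign (s i) * max ⟪w a j, sampleAt zs a i⟫ 0 := by
        simp only [apply_eq_sum_sampleAt hf, Finset.mul_sum]
        rw [Finset.sum_comm]
        refine Finset.sum_congr rfl fun a _ => ?_
        rw [Finset.sum_comm]
        exact Finset.sum_congr rfl fun j _ => Finset.sum_congr rfl fun i _ => by ring
    _ ≤ ∑ a, (m : ℝ)⁻¹ * ∑ j, |b a j| * (‖w a j‖ * S a) := by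
        refine Finset.sum_le_sum fun a _ => mul_le_mul_of_nonneg_left
          (Finset.sum_le_sum fun j _ => ?_) (by positivity)
        refine (le_abs_self _).trans ?_
        rw [abs_mul]
        exact mul_le_mul_of_nonneg_left (abs_sum_mul_relu_inner_le _ _ _) (abs_nonneg _)
    _ = ∑ a, ((m : ℝ)⁻¹ * ∑ j, |b a j| * ‖w a j‖) * S a := by
        simp only [Finset.mul_sum, Finset.sum_mul, mul_assoc]
    _ ≤ r * ∑ a, S a := by
        rw [Finset.mul_sum]
        exact Finset.sum_le_sum fun a _ => mul_le_mul_of_nonneg_right (hbw a) (hS a)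

theorem sum_sSup_reluNetworkClass_le [DecidableEq A] {r : ℝ} (hr : 0 ≤ r)
    (zs : Fin n → UnitSphere d × A) :
    ∑ s : Fin n → Bool,
      sSup {t : ℝ | ∃ f ∈ reluNetworkClass d m A r, t = ∑ i, boolSign (s i) * f (zs i)}
      ≤ 2 ^ n * (2 * r * √(Fintype.card A * n)) := by
  set S : A → (Fin n → Bool) → ℝ := fun a s =>
    ⨆ ω : closedBall (0 : EuclideanSpace ℝ (Fin d)) 1,
      |∑ i, boolSign (s i) * max ⟪(ω : EuclideanSpace ℝ (Fin d)), sampleAt zs a i⟫ 0|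
  have hS : ∀ a s, 0 ≤ S a s := fun a s => Real.iSup_nonneg fun _ => abs_nonneg _
  have hsqrt : ∑ a, √(∑ i, ‖sampleAt zs a i‖ ^ 2) ≤ √(Fintype.card A * n) := by
    refine (Finset.sum_le_sqrt_card_mul_sum_sq _ _).trans_eq ?_
    simp_rw [Real.sq_sqrt (Finset.sum_nonneg fun i _ => sq_nonneg _), sum_sum_norm_sq_sampleAt,
      Finset.card_univ]
  calc ∑ s : Fin n → Bool,
        sSup {t : ℝ | ∃ f ∈ reluNetworkClass d m A r, t = ∑ i, boolSign (s i) * f (zs i)}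
      ≤ ∑ s : Fin n → Bool, r * ∑ a, S a s := Finset.sum_le_sum fun s _ =>
        Real.sSup_le
          (by rintro _ ⟨f, hf, rfl⟩; exact sum_boolSign_mul_le_of_mem_reluNetworkClass hf zs s)
          (mul_nonneg hr (Finset.sum_nonneg fun a _ => hS a s))
    _ = r * ∑ a, ∑ s, S a s := by rw [← Finset.mul_sum, Finset.sum_comm]
    _ ≤ r * ∑ a, 2 * (2 ^ n * √(∑ i, ‖sampleAt zs a i‖ ^ 2)) := by
        gcongr with a
        exact sum_iSup_abs_sum_boolSign_mul_relu_le _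
    _ = 2 ^ n * (2 * r * ∑ a, √(∑ i, ‖sampleAt zs a i‖ ^ 2)) := by
        rw [Finset.mul_sum, Finset.mul_sum, Finset.mul_sum]
        exact Finset.sum_congr rfl fun a _ => by ring
    _ ≤ 2 ^ n * (2 * r * √(Fintype.card A * n)) := by gcongr

end Networks

theorem stmt4_general {d : ℕ} {A : Type*} [Fintype A] [MeasurableSpace A]
    (m : ℕ)
    (ν : Measure (↥(Metric.sphere (0 : EuclideanSpace ℝ (Fin d)) 1) × A))
    [IsProbabilityMeasure ν]
    (n : ℕ) (r : ℝ) (hr : 0 < r) :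
    rad ν {f : ↥(Metric.sphere (0 : EuclideanSpace ℝ (Fin d)) 1) × A → ℝ |
        ∃ (b : A → Fin m → ℝ) (w : A → Fin m → EuclideanSpace ℝ (Fin d)),
          (∀ a, (m : ℝ)⁻¹ * (∑ j, |b a j| * ‖w a j‖) ≤ r) ∧
          ∀ x a, f (x, a)
            = (m : ℝ)⁻¹ * ∑ j, b a j * max (inner ℝ (w a j) (x : EuclideanSpace ℝ (Fin d)) : ℝ) 0} n
      ≤ 2 * r * Real.sqrt ((Fintype.card A : ℝ) / n) := by
  classical
  calc rad ν (reluNetworkClass d m A r) n ≤ 2 * r * √(Fintype.card A * n) / n :=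
        rad_le_of_forall_sum_sSup_le ν _ n (by positivity) (sum_sSup_reluNetworkClass_le hr.le)
    _ = 2 * r * √(Fintype.card A / n) := by
        rw [mul_div_assoc, Real.sqrt_mul_div_of_nonneg _ n.cast_nonneg]

/-- Rademacher complexity bound for the class `F_r` of two-layer ReLU networks
`f(x,a) = (1/m) Σ_j b_{j,a} σ(ω_{j,a}·x)` on `S^{d-1} × A` with path norm
`max_a (1/m) Σ_j |b_{j,a}| ‖ω_{j,a}‖ ≤ r`: for any probability measure `ν` on `S^{d-1} × A`,
`Rad_n(F_r) ≤ 2 r √(|A|/n)`. -/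
theorem stmt4 {d : ℕ} {A : Type*} [Fintype A] [MeasurableSpace A]
    (m : ℕ) (hm : 0 < m)
    (ν : Measure (↥(Metric.sphere (0 : EuclideanSpace ℝ (Fin d)) 1) × A))
    [IsProbabilityMeasure ν]
    (n : ℕ) (hn : 1 ≤ n) (r : ℝ) (hr : 0 < r) :
    rad ν {f : ↥(Metric.sphere (0 : EuclideanSpace ℝ (Fin d)) 1) × A → ℝ |
        ∃ (b : A → Fin m → ℝ) (w : A → Fin m → EuclideanSpace ℝ (Fin d)),
          (∀ a, (m : ℝ)⁻¹ * (∑ j, |b a j| * ‖w a j‖) ≤ r) ∧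
          ∀ x a, f (x, a)
            = (m : ℝ)⁻¹ * ∑ j, b a j * max (inner ℝ (w a j) (x : EuclideanSpace ℝ (Fin d)) : ℝ) 0} n
      ≤ 2 * r * Real.sqrt ((Fintype.card A : ℝ) / n) :=
  stmt4_general m ν n r hr
end
end

section
/- Let σ be the ReLU activation and x_1,…,x_{n'} ∈ S^{d−1}. For i.i.d. Rademacher variables ξ_1,…,ξ_{n'} and any r > 0 and m ∈ ℕ⁺, E sup { Σ_{i=1}^{n'} ξ_i (1/m) Σ_{j=1}^m b_j σ(ω_j·x_i) : b_j ∈ ℝ, ω_j ∈ ℝ^d, (1/m) Σ_{j=1}^m |b_j| ‖ω_j‖ ≤ r } ≤ 2r E sup_{‖ω‖=1} Σ_{i=1}^{n'} ξ_i σ(ω·x_i) ≤ 2r √{n'}. -/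
/-!
A network with path norm at most `r` outputs `m⁻¹ ∑ⱼ bⱼ g_ξ(wⱼ)`, where
`g_ξ(ω) = ∑ᵢ ξᵢ σ(⟪ω, xᵢ⟫)` is positively homogeneous in `ω`; hence its Rademacher sum is at most
`r · sup_{‖ω‖=1} |g_ξ(ω)| = r · max (S ξ) (S (-ξ))` with `S ξ = sup_{‖ω‖=1} g_ξ(ω)`. Since `-ξ` has
the law of `ξ`, it remains to see that `min (S ξ) (S (-ξ))` has nonnegative mean, which follows by
pairing `ξ` with a sign flip adapted to a fixed unit vector. For the second bound, the contraction
principle strips the `1`-Lipschitz `σ` one coordinate at a time, leaving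
`E sup_{‖ω‖=1} ⟪ω, ∑ᵢ ξᵢ xᵢ⟫ = E ‖∑ᵢ ξᵢ xᵢ‖ ≤ (E ‖∑ᵢ ξᵢ xᵢ‖²)^{1/2} = √n'`.
-/

open MeasureTheory
open scoped NNReal ENNReal

noncomputable section

open Finset Function

def signs (n : ℕ) : Finset (Fin n → ℝ) := Fintype.piFinset fun _ => {-1, 1}

section Signs

variable {n : ℕ}

lemma mem_signs {ξ : Fin n → ℝ} : ξ ∈ signs n ↔ ∀ i, ξ i = -1 ∨ ξ i = 1 := by
  simp [signs]

lemma card_signs (n : ℕ) : #(signs n) = 2 ^ n := by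
  simp [signs, Finset.card_pair (show (-1 : ℝ) ≠ 1 by norm_num)]

lemma mul_self_eq_one_of_mem_signs {s : Fin n → ℝ} (hs : s ∈ signs n) : s * s = 1 := by
  funext i
  rcases mem_signs.1 hs i with h | h <;> simp [h]

lemma mul_mem_signs {s ξ : Fin n → ℝ} (hs : s ∈ signs n) (hξ : ξ ∈ signs n) :
    s * ξ ∈ signs n := by
  rw [mem_signs] at *
  intro i
  rcases hs i with h | h <;> rcases hξ i with h' | h' <;> simp [h, h']

lemma sum_signs_comp_mul {M : Type*} [AddCommMonoid M] {s : Fin n → ℝ}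
    (hs : s ∈ signs n) (f : (Fin n → ℝ) → M) :
    ∑ ξ ∈ signs n, f (s * ξ) = ∑ ξ ∈ signs n, f ξ := by
  have hss := mul_self_eq_one_of_mem_signs hs
  refine Finset.sum_nbij' (s * ·) (s * ·) (fun ξ hξ => mul_mem_signs hs hξ)
    (fun ξ hξ => mul_mem_signs hs hξ) (fun ξ _ => ?_) (fun ξ _ => ?_) (fun _ _ => rfl) <;>
    simp only [← mul_assoc, hss, one_mul]

lemma update_one_neg_one_mem_signs (k : Fin n) : update (1 : Fin n → ℝ) k (-1) ∈ signs n := by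
  refine mem_signs.2 fun i => ?_
  rcases eq_or_ne i k with rfl | h <;> simp [*]

instance : IsFiniteMeasure radM := by
  unfold radM
  infer_instance

lemma pi_radM_eq_sum_dirac :
    Measure.pi (fun _ : Fin n => radM) = ∑ ξ ∈ signs n, ((2 : ℝ≥0∞) ^ n)⁻¹ • Measure.dirac ξ := by
  refine Measure.pi_eq fun s hs => ?_
  have hbox : MeasurableSet (Set.univ.pi s) := MeasurableSet.univ_pi hs
  have hradM : ∀ i, radM (s i) = ∑ t ∈ ({-1, 1} : Finset ℝ), 2⁻¹ * (s i).indicator 1 t := by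
    intro i
    rw [Finset.sum_pair (by norm_num)]
    simp [radM, Measure.dirac_apply' _ (hs i), ENNReal.smul_def, add_comm]
  simp_rw [hradM, Finset.prod_univ_sum, Measure.finsetSum_apply, Measure.smul_apply,
    Measure.dirac_apply' _ hbox, ← Finset.coe_univ, Set.indicator_pi_one_apply,
    Finset.prod_mul_distrib, Finset.prod_const, Finset.card_univ, Fintype.card_fin, ENNReal.inv_pow]
  rfl

lemma integral_pi_radM_s5 (f : (Fin n → ℝ) → ℝ) :
    ∫ ξ, f ξ ∂(Measure.pi fun _ : Fin n => radM) = ((2 : ℝ) ^ n)⁻¹ * ∑ ξ ∈ signs n, f ξ := by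
  rw [pi_radM_eq_sum_dirac, integral_finsetSum_measure fun ξ _ =>
    (integrable_dirac (by simp)).smul_measure (by simp), Finset.mul_sum]
  simp [integral_smul_measure, integral_dirac]

end Signs

section Contraction

variable {ι : Type*} {n : ℕ}

lemma abs_apply_le_abs_apply_zero_add {φ : ℝ → ℝ} (hφ : LipschitzWith 1 φ) (t : ℝ) :
    |φ t| ≤ |φ 0| + |t| := by
  have := hφ.dist_le_mul t 0
  rw [Real.dist_eq, Real.dist_eq, NNReal.coe_one, one_mul, sub_zero] at this
  linarith [abs_sub_abs_le_abs_sub (φ t) (φ 0)]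

lemma bddAbove_range_sum_mul_comp {ψ : Fin n → ℝ → ℝ} (hψ : ∀ i, LipschitzWith 1 (ψ i))
    {a : Fin n → ι → ℝ} (ha : ∀ i, ∃ C, ∀ ω, |a i ω| ≤ C) (ξ : Fin n → ℝ) :
    BddAbove (Set.range fun ω => ∑ i, ξ i * ψ i (a i ω)) := by
  choose C hC using ha
  refine ⟨∑ i, |ξ i| * (|ψ i 0| + C i), ?_⟩
  rintro _ ⟨ω, rfl⟩
  refine Finset.sum_le_sum fun i _ => ?_
  calc ξ i * ψ i (a i ω) ≤ |ξ i| * |ψ i (a i ω)| := by rw [← abs_mul]; exact le_abs_self _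
    _ ≤ |ξ i| * (|ψ i 0| + C i) := by
      gcongr
      exact (abs_apply_le_abs_apply_zero_add (hψ i) _).trans (by gcongr; exact hC i ω)

lemma iSup_add_iSup_neg_le {u v h : ι → ℝ} (huv : ∀ ω ω', u ω - u ω' ≤ |v ω - v ω'|)
    (hv : BddAbove (Set.range fun ω => v ω + h ω))
    (hv' : BddAbove (Set.range fun ω => -v ω + h ω)) :
    (⨆ ω, u ω + h ω) + ⨆ ω, -u ω + h ω ≤ (⨆ ω, v ω + h ω) + ⨆ ω, -v ω + h ω := by
  rcases isEmpty_or_nonempty ι with hι | hι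
  · simp [Real.iSup_of_isEmpty]
  have key : ∀ ω ω', (u ω + h ω) + (-u ω' + h ω') ≤ (⨆ ω, v ω + h ω) + ⨆ ω, -v ω + h ω := by
    intro ω ω'
    rcases le_total (v ω') (v ω) with hle | hle
    · have := huv ω ω'
      rw [abs_of_nonneg (sub_nonneg.2 hle)] at this
      linarith [le_ciSup hv ω, le_ciSup hv' ω']
    · have := huv ω ω'
      rw [abs_of_nonpos (sub_nonpos.2 hle)] at this
      linarith [le_ciSup hv ω', le_ciSup hv' ω]
  have key' : ∀ ω, (⨆ ω', -u ω' + h ω') ≤ (⨆ ω, v ω + h ω) + (⨆ ω, -v ω + h ω) - (u ω + h ω) :=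
    fun ω => ciSup_le fun ω' => by linarith [key ω ω']
  have : (⨆ ω, u ω + h ω) ≤ (⨆ ω, v ω + h ω) + (⨆ ω, -v ω + h ω) - ⨆ ω, -u ω + h ω :=
    ciSup_le fun ω => by linarith [key' ω]
  linarith

lemma iSup_add_iSup_le_update {ψ : Fin n → ℝ → ℝ} (hψ : ∀ i, LipschitzWith 1 (ψ i))
    {a : Fin n → ι → ℝ} (ha : ∀ i, ∃ C, ∀ ω, |a i ω| ≤ C) (k : Fin n) {ξ ξ' : Fin n → ℝ}
    (hk : ξ' k = -ξ k) (hξ' : ∀ i ≠ k, ξ' i = ξ i) :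
    (⨆ ω, ∑ i, ξ i * ψ i (a i ω)) + ⨆ ω, ∑ i, ξ' i * ψ i (a i ω) ≤
      (⨆ ω, ∑ i, ξ i * update ψ k id i (a i ω)) + ⨆ ω, ∑ i, ξ' i * update ψ k id i (a i ω) := by
  have hψ' : ∀ i, LipschitzWith 1 (update ψ k id i) := by
    intro i
    rcases eq_or_ne i k with rfl | hi
    · simpa using LipschitzWith.id
    · simpa [hi] using hψ i
  set h : ι → ℝ := fun ω => ∑ i ∈ univ.erase k, ξ i * ψ i (a i ω)
  have split : ∀ (η : Fin n → ℝ) (χ : Fin n → ℝ → ℝ),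
      (∀ i ≠ k, η i = ξ i) → (∀ i ≠ k, χ i = ψ i) →
      ∀ ω, ∑ i, η i * χ i (a i ω) = η k * χ k (a k ω) + h ω := by
    intro η χ hη hχ ω
    rw [← Finset.add_sum_erase _ _ (mem_univ k)]
    congr 1
    refine Finset.sum_congr rfl fun i hi => ?_
    rw [hη i (ne_of_mem_erase hi), hχ i (ne_of_mem_erase hi)]
  have hupd : ∀ i ≠ k, update ψ k id i = ψ i := fun i hi => update_of_ne hi _ _
  have e1 := split ξ ψ (fun _ _ => rfl) (fun _ _ => rfl)
  have e2 := split ξ' ψ hξ' (fun _ _ => rfl)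
  have e3 := split ξ _ (fun _ _ => rfl) hupd
  have e4 := split ξ' _ hξ' hupd
  simp only [hk, update_self, id, neg_mul] at e2 e3 e4
  have b3 := bddAbove_range_sum_mul_comp hψ' ha ξ
  have b4 := bddAbove_range_sum_mul_comp hψ' ha ξ'
  simp only [e1, e2, e3, e4] at b3 b4 ⊢
  refine iSup_add_iSup_neg_le (fun ω ω' => ?_) b3 b4
  have := (hψ k).dist_le_mul (a k ω) (a k ω')
  rw [Real.dist_eq, Real.dist_eq, NNReal.coe_one, one_mul] at this
  calc ξ k * ψ k (a k ω) - ξ k * ψ k (a k ω') ≤ |ξ k| * |ψ k (a k ω) - ψ k (a k ω')| := by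
        rw [← mul_sub, ← abs_mul]; exact le_abs_self _
    _ ≤ |ξ k| * |a k ω - a k ω'| := by gcongr
    _ = |ξ k * a k ω - ξ k * a k ω'| := by rw [← mul_sub, abs_mul]

lemma sum_signs_iSup_le_update {ψ : Fin n → ℝ → ℝ} (hψ : ∀ i, LipschitzWith 1 (ψ i))
    {a : Fin n → ι → ℝ} (ha : ∀ i, ∃ C, ∀ ω, |a i ω| ≤ C) (k : Fin n) :
    ∑ ξ ∈ signs n, ⨆ ω, ∑ i, ξ i * ψ i (a i ω) ≤
      ∑ ξ ∈ signs n, ⨆ ω, ∑ i, ξ i * update ψ k id i (a i ω) := by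
  set s := update (1 : Fin n → ℝ) k (-1)
  have hs : s ∈ signs n := update_one_neg_one_mem_signs k
  have hpair := Finset.sum_le_sum fun ξ (_ : ξ ∈ signs n) =>
    iSup_add_iSup_le_update hψ ha k (ξ := ξ) (ξ' := s * ξ) (by simp [s])
      (fun i hi => by simp [s, hi])
  rw [Finset.sum_add_distrib, Finset.sum_add_distrib,
    sum_signs_comp_mul hs (fun ξ => ⨆ ω, ∑ i, ξ i * ψ i (a i ω)),
    sum_signs_comp_mul hs (fun ξ => ⨆ ω, ∑ i, ξ i * update ψ k id i (a i ω))] at hpair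
  linarith

/-- Ledoux–Talagrand contraction principle, in the one-sided form that needs no `φ 0 = 0`. -/
theorem sum_signs_iSup_comp_le {φ : ℝ → ℝ} (hφ : LipschitzWith 1 φ) {a : Fin n → ι → ℝ}
    (ha : ∀ i, ∃ C, ∀ ω, |a i ω| ≤ C) :
    ∑ ξ ∈ signs n, ⨆ ω, ∑ i, ξ i * φ (a i ω) ≤ ∑ ξ ∈ signs n, ⨆ ω, ∑ i, ξ i * a i ω := by
  classical
  let ψ : Finset (Fin n) → Fin n → ℝ → ℝ := fun t i => if i ∈ t then id else φ
  have hψ : ∀ t i, LipschitzWith 1 (ψ t i) := fun t i => by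
    by_cases hi : i ∈ t <;> simp [ψ, hi, hφ, LipschitzWith.id]
  suffices ∀ t, ∑ ξ ∈ signs n, ⨆ ω, ∑ i, ξ i * ψ ∅ i (a i ω) ≤
      ∑ ξ ∈ signs n, ⨆ ω, ∑ i, ξ i * ψ t i (a i ω) by simpa [ψ] using this univ
  intro t
  induction t using Finset.induction_on with
  | empty => rfl
  | insert k t _ ih =>
    refine ih.trans (le_of_le_of_eq (sum_signs_iSup_le_update (hψ t) ha k) ?_)
    congr! 5 with ξ _ ω i
    by_cases hi : i = k <;> simp [ψ, hi]

end Contraction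

lemma zero_le_min_add_min {a b c d : ℝ} (hac : 0 ≤ a + c) (had : 0 ≤ a + d) (hbc : 0 ≤ b + c)
    (hbd : 0 ≤ b + d) : 0 ≤ min a b + min c d := by
  rcases min_cases a b with ⟨e, -⟩ | ⟨e, -⟩ <;> rcases min_cases c d with ⟨e', -⟩ | ⟨e', -⟩ <;>
    rwa [e, e']

section Relu

variable {E : Type*} [NormedAddCommGroup E] [InnerProductSpace ℝ E] {n : ℕ} (x : Fin n → E)

def reluSum (ξ : Fin n → ℝ) (ω : E) : ℝ :=
  ∑ i, ξ i * max (inner ℝ ω (x i) : ℝ) 0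

def reluSup (ξ : Fin n → ℝ) : ℝ :=
  sSup {t : ℝ | ∃ ω : E, ‖ω‖ = 1 ∧ t = reluSum x ξ ω}

def reluNetSup (r : ℝ) (m : ℕ) (ξ : Fin n → ℝ) : ℝ :=
  sSup {t : ℝ | ∃ (b : Fin m → ℝ) (w : Fin m → E),
    (m : ℝ)⁻¹ * (∑ j, |b j| * ‖w j‖) ≤ r ∧
    t = ∑ i, ξ i * ((m : ℝ)⁻¹ * ∑ j, b j * max (inner ℝ (w j) (x i) : ℝ) 0)}

lemma reluSup_eq_iSup (ξ : Fin n → ℝ) :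
    reluSup x ξ = ⨆ ω : Metric.sphere (0 : E) 1, reluSum x ξ ω := by
  rw [reluSup, iSup]
  congr 1
  ext t
  simp [eq_comm]

lemma abs_inner_le_of_mem_sphere (ω : Metric.sphere (0 : E) 1) (y : E) :
    |(inner ℝ (ω : E) y : ℝ)| ≤ ‖y‖ := by
  simpa [norm_eq_of_mem_sphere ω] using abs_real_inner_le_norm (ω : E) y

lemma bddAbove_range_reluSum (ξ : Fin n → ℝ) :
    BddAbove (Set.range fun ω : Metric.sphere (0 : E) 1 => reluSum x ξ ω) :=
  bddAbove_range_sum_mul_comp (ψ := fun _ t => max t 0) (fun _ => LipschitzWith.id.max_const 0)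
    (a := fun i (ω : Metric.sphere (0 : E) 1) => inner ℝ (ω : E) (x i))
    (fun i => ⟨_, fun ω => abs_inner_le_of_mem_sphere ω (x i)⟩) ξ

lemma reluSum_le_reluSup (ξ : Fin n → ℝ) {ω : E} (hω : ‖ω‖ = 1) : reluSum x ξ ω ≤ reluSup x ξ := by
  rw [reluSup_eq_iSup]
  exact le_ciSup (bddAbove_range_reluSum x ξ) ⟨ω, by simpa using hω⟩

lemma reluSum_neg (ξ : Fin n → ℝ) (ω : E) : reluSum x (-ξ) ω = -reluSum x ξ ω := by
  simp [reluSum]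

lemma reluSum_smul (ξ : Fin n → ℝ) {c : ℝ} (hc : 0 ≤ c) (ω : E) :
    reluSum x ξ (c • ω) = c * reluSum x ξ ω := by
  rw [reluSum, reluSum, Finset.mul_sum]
  refine Finset.sum_congr rfl fun i _ => ?_
  rw [real_inner_smul_left, mul_left_comm, mul_max_of_nonneg _ _ hc, mul_zero]

lemma abs_reluSum_le_max (ξ : Fin n → ℝ) {ω : E} (hω : ‖ω‖ = 1) :
    |reluSum x ξ ω| ≤ max (reluSup x ξ) (reluSup x (-ξ)) := by
  refine abs_le'.2 ⟨(reluSum_le_reluSup x ξ hω).trans (le_max_left _ _), ?_⟩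
  rw [← reluSum_neg]
  exact (reluSum_le_reluSup x (-ξ) hω).trans (le_max_right _ _)

lemma reluSup_eq_zero_of_forall_norm_ne_one (h : ∀ ω : E, ‖ω‖ ≠ 1) (ξ : Fin n → ℝ) :
    reluSup x ξ = 0 := by
  simp [reluSup, h]

lemma max_reluSup_neg_nonneg (ξ : Fin n → ℝ) : 0 ≤ max (reluSup x ξ) (reluSup x (-ξ)) := by
  by_cases h : ∀ ω : E, ‖ω‖ ≠ 1
  · simp [reluSup_eq_zero_of_forall_norm_ne_one x h]
  · obtain ⟨ω, hω⟩ := not_forall_not.1 h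
    exact (abs_nonneg _).trans (abs_reluSum_le_max x ξ hω)

lemma abs_reluSum_le_norm_mul (ξ : Fin n → ℝ) {M : ℝ}
    (hM : ∀ ω : E, ‖ω‖ = 1 → |reluSum x ξ ω| ≤ M) (w : E) : |reluSum x ξ w| ≤ ‖w‖ * M := by
  rcases eq_or_ne w 0 with rfl | hw
  · simp [reluSum]
  calc |reluSum x ξ w| = |reluSum x ξ (‖w‖ • ‖w‖⁻¹ • w)| := by
        rw [smul_inv_smul₀ (norm_ne_zero_iff.2 hw)]
    _ = ‖w‖ * |reluSum x ξ (‖w‖⁻¹ • w)| := by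
        rw [reluSum_smul x ξ (norm_nonneg w), abs_mul, abs_norm]
    _ ≤ ‖w‖ * M := by
        gcongr
        exact hM _ (norm_smul_inv_norm hw)

lemma reluNetSup_le {r M : ℝ} (hr : 0 ≤ r) (hM₀ : 0 ≤ M) (m : ℕ) (ξ : Fin n → ℝ)
    (hM : ∀ ω : E, ‖ω‖ = 1 → |reluSum x ξ ω| ≤ M) : reluNetSup x r m ξ ≤ r * M := by
  refine Real.sSup_le ?_ (mul_nonneg hr hM₀)
  rintro _ ⟨b, w, hbw, rfl⟩
  calc ∑ i, ξ i * ((m : ℝ)⁻¹ * ∑ j, b j * max (inner ℝ (w j) (x i) : ℝ) 0)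
      = (m : ℝ)⁻¹ * ∑ j, b j * reluSum x ξ (w j) := by
        simp only [reluSum, Finset.mul_sum]
        rw [Finset.sum_comm]
        exact Finset.sum_congr rfl fun j _ => Finset.sum_congr rfl fun i _ => by ring
    _ ≤ (m : ℝ)⁻¹ * ∑ j, |b j| * ‖w j‖ * M := by
        refine mul_le_mul_of_nonneg_left (Finset.sum_le_sum fun j _ => ?_) (by positivity)
        calc b j * reluSum x ξ (w j) ≤ |b j| * |reluSum x ξ (w j)| := by
              rw [← abs_mul]; exact le_abs_self _
          _ ≤ |b j| * (‖w j‖ * M) := by gcongr; exact abs_reluSum_le_norm_mul x ξ hM (w j)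
          _ = |b j| * ‖w j‖ * M := by ring
    _ = ((m : ℝ)⁻¹ * ∑ j, |b j| * ‖w j‖) * M := by rw [← Finset.sum_mul]; ring
    _ ≤ r * M := by gcongr

lemma sum_signs_reluSup_neg :
    ∑ ξ ∈ signs n, reluSup x (-ξ) = ∑ ξ ∈ signs n, reluSup x ξ := by
  simpa only [neg_one_mul] using
    sum_signs_comp_mul (s := -1) (mem_signs.2 fun _ => Or.inl rfl) (reluSup x)

def halfspaceFlip (ω₀ : E) : Fin n → ℝ := fun i => if (inner ℝ ω₀ (x i) : ℝ) < 0 then -1 else 1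

lemma halfspaceFlip_mem_signs (ω₀ : E) : halfspaceFlip x ω₀ ∈ signs n :=
  mem_signs.2 fun i => by
    by_cases hi : (inner ℝ ω₀ (x i) : ℝ) < 0 <;> simp [halfspaceFlip, hi]

lemma reluSum_halfspaceFlip_mul (ω₀ : E) (ξ : Fin n → ℝ) :
    reluSum x (halfspaceFlip x ω₀ * ξ) ω₀ = reluSum x ξ ω₀ :=
  Finset.sum_congr rfl fun i _ => by
    by_cases hi : (inner ℝ ω₀ (x i) : ℝ) < 0
    · simp [halfspaceFlip, hi, max_eq_right hi.le]
    · simp [halfspaceFlip, hi]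

lemma reluSum_halfspaceFlip_mul_neg (ω₀ : E) (ξ : Fin n → ℝ) :
    reluSum x (halfspaceFlip x ω₀ * ξ) (-ω₀) = -reluSum x ξ (-ω₀) := by
  rw [reluSum, reluSum, ← Finset.sum_neg_distrib]
  refine Finset.sum_congr rfl fun i _ => ?_
  by_cases hi : (inner ℝ ω₀ (x i) : ℝ) < 0
  · simp [halfspaceFlip, hi]
  · simp [halfspaceFlip, hi, max_eq_right (neg_nonpos.2 (not_lt.1 hi))]

lemma sum_signs_min_reluSup_neg_nonneg :
    0 ≤ ∑ ξ ∈ signs n, min (reluSup x ξ) (reluSup x (-ξ)) := by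
  by_cases h : ∀ ω : E, ‖ω‖ ≠ 1
  · simp [reluSup_eq_zero_of_forall_norm_ne_one x h]
  obtain ⟨ω₀, hω₀⟩ := not_forall_not.1 h
  have hω₀' : ‖-ω₀‖ = 1 := by rw [norm_neg, hω₀]
  set s := halfspaceFlip x ω₀
  -- Each cross sum `reluSup x (±ξ) + reluSup x (±(s * ξ))` dominates `g + (-g) = 0` for `g` the
  -- value of `reluSum x ξ` at `ω₀` or at `-ω₀`.
  have hpair : ∀ ξ, 0 ≤ min (reluSup x ξ) (reluSup x (-ξ)) +
      min (reluSup x (s * ξ)) (reluSup x (-(s * ξ))) := by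
    intro ξ
    have h₁ := reluSum_le_reluSup x ξ hω₀
    have h₂ := reluSum_le_reluSup x ξ hω₀'
    have h₃ := reluSum_le_reluSup x (-ξ) hω₀
    have h₄ := reluSum_le_reluSup x (-ξ) hω₀'
    have h₅ := reluSum_le_reluSup x (s * ξ) hω₀
    have h₆ := reluSum_le_reluSup x (s * ξ) hω₀'
    have h₇ := reluSum_le_reluSup x (-(s * ξ)) hω₀
    have h₈ := reluSum_le_reluSup x (-(s * ξ)) hω₀'
    simp only [reluSum_neg, reluSum_halfspaceFlip_mul, reluSum_halfspaceFlip_mul_neg, s]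
      at h₃ h₄ h₅ h₆ h₇ h₈
    exact zero_le_min_add_min (by linarith) (by linarith) (by linarith) (by linarith)
  have hsum := Finset.sum_nonneg fun ξ (_ : ξ ∈ signs n) => hpair ξ
  rw [Finset.sum_add_distrib, sum_signs_comp_mul (halfspaceFlip_mem_signs x ω₀)
    fun ξ => min (reluSup x ξ) (reluSup x (-ξ))] at hsum
  linarith

lemma sum_signs_max_reluSup_neg_le :
    ∑ ξ ∈ signs n, max (reluSup x ξ) (reluSup x (-ξ)) ≤ 2 * ∑ ξ ∈ signs n, reluSup x ξ := by
  have hmax : ∀ ξ, max (reluSup x ξ) (reluSup x (-ξ)) =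
      reluSup x ξ + reluSup x (-ξ) - min (reluSup x ξ) (reluSup x (-ξ)) := fun ξ => by
    rw [← min_add_max]; ring
  simp only [hmax, Finset.sum_sub_distrib, Finset.sum_add_distrib, sum_signs_reluSup_neg]
  linarith [sum_signs_min_reluSup_neg_nonneg x]

theorem integral_reluNetSup_le {r : ℝ} (hr : 0 ≤ r) (m : ℕ) :
    ∫ ξ, reluNetSup x r m ξ ∂(Measure.pi fun _ => radM) ≤
      2 * r * ∫ ξ, reluSup x ξ ∂(Measure.pi fun _ => radM) := by
  rw [integral_pi_radM_s5, integral_pi_radM_s5]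
  have hnet : ∑ ξ ∈ signs n, reluNetSup x r m ξ ≤
      r * ∑ ξ ∈ signs n, max (reluSup x ξ) (reluSup x (-ξ)) := by
    rw [Finset.mul_sum]
    exact Finset.sum_le_sum fun ξ _ => reluNetSup_le x hr (max_reluSup_neg_nonneg x ξ) m ξ
      fun ω hω => abs_reluSum_le_max x ξ hω
  calc ((2 : ℝ) ^ n)⁻¹ * ∑ ξ ∈ signs n, reluNetSup x r m ξ
      ≤ ((2 : ℝ) ^ n)⁻¹ * (r * (2 * ∑ ξ ∈ signs n, reluSup x ξ)) := by
        gcongr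
        exact hnet.trans (by gcongr; exact sum_signs_max_reluSup_neg_le x)
    _ = 2 * r * (((2 : ℝ) ^ n)⁻¹ * ∑ ξ ∈ signs n, reluSup x ξ) := by ring

lemma iSup_sphere_sum_mul_inner_le (ξ : Fin n → ℝ) :
    ⨆ ω : Metric.sphere (0 : E) 1, ∑ i, ξ i * (inner ℝ (ω : E) (x i) : ℝ) ≤ ‖∑ i, ξ i • x i‖ := by
  refine Real.iSup_le (fun ω => ?_) (norm_nonneg _)
  calc ∑ i, ξ i * (inner ℝ (ω : E) (x i) : ℝ) = inner ℝ (ω : E) (∑ i, ξ i • x i) := by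
        simp [inner_sum, real_inner_smul_right]
    _ ≤ ‖(ω : E)‖ * ‖∑ i, ξ i • x i‖ := real_inner_le_norm _ _
    _ = ‖∑ i, ξ i • x i‖ := by rw [norm_eq_of_mem_sphere, one_mul]

lemma sum_signs_mul_apply (i j : Fin n) :
    ∑ ξ ∈ signs n, ξ i * ξ j = if i = j then 2 ^ n else 0 := by
  split_ifs with h
  · subst h
    have hsq : ∀ ξ ∈ signs n, ξ i * ξ i = 1 := fun ξ hξ => by
      rcases mem_signs.1 hξ i with h | h <;> simp [h]
    simp [Finset.sum_congr rfl hsq, card_signs]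
  · have := sum_signs_comp_mul (update_one_neg_one_mem_signs j) fun ξ => ξ i * ξ j
    simp only [Pi.mul_apply, update_self, update_of_ne h, Pi.one_apply, one_mul, neg_one_mul,
      mul_neg, Finset.sum_neg_distrib] at this
    linarith

lemma sum_signs_norm_sum_smul_sq :
    ∑ ξ ∈ signs n, ‖∑ i, ξ i • x i‖ ^ 2 = 2 ^ n * ∑ i, ‖x i‖ ^ 2 := by
  calc ∑ ξ ∈ signs n, ‖∑ i, ξ i • x i‖ ^ 2
      = ∑ i, ∑ j, (∑ ξ ∈ signs n, ξ i * ξ j) * (inner ℝ (x j) (x i) : ℝ) := by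
        simp only [← real_inner_self_eq_norm_sq, sum_inner, inner_sum, real_inner_smul_left,
          real_inner_smul_right, Finset.sum_mul]
        rw [Finset.sum_comm]
        refine Finset.sum_congr rfl fun i _ => ?_
        rw [Finset.sum_comm]
        exact Finset.sum_congr rfl fun j _ => Finset.sum_congr rfl fun ξ _ => by ring
    _ = 2 ^ n * ∑ i, ‖x i‖ ^ 2 := by
        simp [sum_signs_mul_apply, Finset.mul_sum]

lemma sum_signs_norm_sum_smul_le (hx : ∀ i, ‖x i‖ ≤ 1) :
    ∑ ξ ∈ signs n, ‖∑ i, ξ i • x i‖ ≤ 2 ^ n * √n := by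
  have hcs := sq_sum_le_card_mul_sum_sq (s := signs n) (f := fun ξ => ‖∑ i, ξ i • x i‖)
  rw [card_signs, sum_signs_norm_sum_smul_sq] at hcs
  have hx2 : ∑ i, ‖x i‖ ^ 2 ≤ n := by
    simpa using Finset.sum_le_sum fun i (_ : i ∈ univ) => pow_le_one₀ (norm_nonneg (x i)) (hx i)
  rw [show (2 : ℝ) ^ n * √n = √((2 ^ n) ^ 2 * n) by
    rw [Real.sqrt_mul (by positivity), Real.sqrt_sq (by positivity)]]
  refine Real.le_sqrt_of_sq_le (hcs.trans ?_)
  push_cast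
  nlinarith [pow_pos (two_pos (α := ℝ)) n]

theorem integral_reluSup_le_sqrt (hx : ∀ i, ‖x i‖ ≤ 1) :
    ∫ ξ, reluSup x ξ ∂(Measure.pi fun _ => radM) ≤ √n := by
  rw [integral_pi_radM_s5]
  have hrelu : ∑ ξ ∈ signs n, reluSup x ξ ≤
      ∑ ξ ∈ signs n, ⨆ ω : Metric.sphere (0 : E) 1, ∑ i, ξ i * (inner ℝ (ω : E) (x i) : ℝ) := by
    simp only [reluSup_eq_iSup, reluSum]
    exact sum_signs_iSup_comp_le (LipschitzWith.id.max_const 0)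
      fun i => ⟨_, fun ω => abs_inner_le_of_mem_sphere ω (x i)⟩
  calc ((2 : ℝ) ^ n)⁻¹ * ∑ ξ ∈ signs n, reluSup x ξ
      ≤ ((2 : ℝ) ^ n)⁻¹ * (2 ^ n * √n) := by
        gcongr
        exact hrelu.trans ((Finset.sum_le_sum fun ξ _ => iSup_sphere_sum_mul_inner_le x ξ).trans
          (sum_signs_norm_sum_smul_le x hx))
    _ = √n := by field_simp

end Relu

theorem stmt5_general {d : ℕ} (n' : ℕ) (x : Fin n' → EuclideanSpace ℝ (Fin d))
    (hx : ∀ i, ‖x i‖ = 1) (r : ℝ) (hr : 0 < r) (m : ℕ) :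
    (∫ ξ : Fin n' → ℝ,
        sSup {t : ℝ | ∃ (b : Fin m → ℝ) (w : Fin m → EuclideanSpace ℝ (Fin d)),
          (m : ℝ)⁻¹ * (∑ j, |b j| * ‖w j‖) ≤ r ∧
          t = ∑ i, ξ i * ((m : ℝ)⁻¹ * ∑ j, b j * max (inner ℝ (w j) (x i) : ℝ) 0)}
        ∂(Measure.pi fun _ : Fin n' => radM))
      ≤ 2 * r * ∫ ξ : Fin n' → ℝ,
          sSup {t : ℝ | ∃ ω : EuclideanSpace ℝ (Fin d), ‖ω‖ = 1 ∧
            t = ∑ i, ξ i * max (inner ℝ ω (x i) : ℝ) 0}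
          ∂(Measure.pi fun _ : Fin n' => radM) ∧
    2 * r * (∫ ξ : Fin n' → ℝ,
          sSup {t : ℝ | ∃ ω : EuclideanSpace ℝ (Fin d), ‖ω‖ = 1 ∧
            t = ∑ i, ξ i * max (inner ℝ ω (x i) : ℝ) 0}
          ∂(Measure.pi fun _ : Fin n' => radM))
      ≤ 2 * r * Real.sqrt n' :=
  ⟨integral_reluNetSup_le x hr.le m,
    mul_le_mul_of_nonneg_left (integral_reluSup_le_sqrt x fun i => (hx i).le) (by positivity)⟩

/-- for points `x_1, …, x_{n'}` on the unit sphere `S^{d-1}`, i.i.d. Rademacher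
variables `ξ_1, …, ξ_{n'}`, any `r > 0` and `m ∈ ℕ⁺`,
`E sup { Σ_i ξ_i (1/m) Σ_j b_j σ(ω_j·x_i) : (1/m) Σ_j |b_j| ‖ω_j‖ ≤ r }
  ≤ 2 r E sup_{‖ω‖=1} Σ_i ξ_i σ(ω·x_i) ≤ 2 r √n'`, where `σ` is the ReLU. -/
theorem stmt5 {d : ℕ} (n' : ℕ) (x : Fin n' → EuclideanSpace ℝ (Fin d))
    (hx : ∀ i, ‖x i‖ = 1) (r : ℝ) (hr : 0 < r) (m : ℕ) (hm : 0 < m) :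
    (∫ ξ : Fin n' → ℝ,
        sSup {t : ℝ | ∃ (b : Fin m → ℝ) (w : Fin m → EuclideanSpace ℝ (Fin d)),
          (m : ℝ)⁻¹ * (∑ j, |b j| * ‖w j‖) ≤ r ∧
          t = ∑ i, ξ i * ((m : ℝ)⁻¹ * ∑ j, b j * max (inner ℝ (w j) (x i) : ℝ) 0)}
        ∂(Measure.pi fun _ : Fin n' => radM))
      ≤ 2 * r * ∫ ξ : Fin n' → ℝ,
          sSup {t : ℝ | ∃ ω : EuclideanSpace ℝ (Fin d), ‖ω‖ = 1 ∧
            t = ∑ i, ξ i * max (inner ℝ ω (x i) : ℝ) 0}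
          ∂(Measure.pi fun _ : Fin n' => radM) ∧
    2 * r * (∫ ξ : Fin n' → ℝ,
          sSup {t : ℝ | ∃ ω : EuclideanSpace ℝ (Fin d), ‖ω‖ = 1 ∧
            t = ∑ i, ξ i * max (inner ℝ ω (x i) : ℝ) 0}
          ∂(Measure.pi fun _ : Fin n' => radM))
      ≤ 2 * r * Real.sqrt n' :=
  stmt5_general n' x hx r hr m

end
end
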